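/- Let G be a mixed graph and let P be a partition of its nodes. If P is acyclic with respect to G (i.e. the coarse graph co(G,P) is acyclic), then co(G^acy, P) = co(G, P), i.e. the coarse graph of the acyclification of G equals the coarse graph of G, having exactly the same directed, bidirected and undirected edges. -/
import Mathlib


/-! ## Mixed graphs -/

/-- A mixed graph: directed, bidirected and undirected edges, no self-edges. -/
structure MixedGraph (V : Type) where
  dir : V → V → Prop
  bidir : V → V → Prop
  undir : V → V → Prop
  bidir_symm : ∀ {a b}, bidir a b → bidir b a
  undir_symm : ∀ {a b}, undir a b → undir b a
  dir_irrefl : ∀ a, ¬ dir a a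
  bidir_irrefl : ∀ a, ¬ bidir a a
  undir_irrefl : ∀ a, ¬ undir a a

namespace MixedGraph

variable {V I : Type}

/-- A directed mixed graph is a mixed graph without undirected edges. -/
def IsDMG (G : MixedGraph V) : Prop := ∀ a b, ¬ G.undir a b

/-- `a` and `b` lie in the same strongly connected component: there are directed
paths between them in both directions. -/
def Strongly (G : MixedGraph V) (a b : V) : Prop :=
  Relation.ReflTransGen G.dir a b ∧ Relation.ReflTransGen G.dir b a

lemma Strongly.refl (G : MixedGraph V) (a : V) : G.Strongly a a :=
  ⟨Relation.ReflTransGen.refl, Relation.ReflTransGen.refl⟩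

lemma Strongly.symm {G : MixedGraph V} {a b : V} (h : G.Strongly a b) : G.Strongly b a :=
  ⟨h.2, h.1⟩

/-- A graph is acyclic if it has no nontrivial directed closed walk. -/
def Acyclic (G : MixedGraph V) : Prop := ∀ a, ¬ Relation.TransGen G.dir a a

end MixedGraph

/-! ## Walks -/

/-- The four ways in which an edge can occur on a walk, as traversed from its
first node `a` to its second node `b`: `fw` is `a → b`, `bw` is `a ← b`,
`bi` is `a ↔ b` and `un` is `a − b`. -/
inductive StepKind | fw | bw | bi | un
deriving DecidableEq

/-- A step of a walk: an ordered pair of nodes together with the kind of edge. -/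
structure Step (V : Type) where
  a : V
  b : V
  k : StepKind

/-- The step is an actual edge of the graph `G`. -/
def Step.ok {V : Type} (G : MixedGraph V) (s : Step V) : Prop :=
  match s.k with
  | .fw => G.dir s.a s.b
  | .bw => G.dir s.b s.a
  | .bi => G.bidir s.a s.b
  | .un => G.undir s.a s.b

/-- The edge of the step has an arrowhead at its first node. -/
def Step.headA {V : Type} (s : Step V) : Prop := s.k = .bw ∨ s.k = .bi

/-- The edge of the step has an arrowhead at its second node. -/
def Step.headB {V : Type} (s : Step V) : Prop := s.k = .fw ∨ s.k = .bi

namespace MixedGraph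

variable {V I : Type}

/-- `IsWalk G x y L`: the list of steps `L` forms a walk from `x` to `y` in `G`. -/
inductive IsWalk (G : MixedGraph V) : V → V → List (Step V) → Prop
  | nil (a : V) : IsWalk G a a []
  | cons {c : V} (s : Step V) (L : List (Step V)) (hok : s.ok G)
      (hw : IsWalk G s.b c L) : IsWalk G s.a c (s :: L)

/-- `v` is a collider at junction `i` of the walk `L`: both edges adjacent to the
inner node `v` point into `v`. -/
def ColliderAt (L : List (Step V)) (i : ℕ) (v : V) : Prop :=
  ∃ s t, L[i]? = some s ∧ L[i+1]? = some t ∧ s.b = v ∧ t.a = v ∧ s.headB ∧ t.headA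

/-- `v` is a non-collider at junction `i` of the walk `L`. -/
def NonColliderAt (L : List (Step V)) (i : ℕ) (v : V) : Prop :=
  ∃ s t, L[i]? = some s ∧ L[i+1]? = some t ∧ s.b = v ∧ t.a = v ∧ ¬ (s.headB ∧ t.headA)

/-- The walk `L` from `x` to `y` is m-blocked by the node set `S`. -/
def MBlockedWalk (G : MixedGraph V) (S : Set V) (x y : V) (L : List (Step V)) : Prop :=
  x ∈ S ∨ y ∈ S ∨
  (∃ i v, ColliderAt L i v ∧ ∀ d, Relation.ReflTransGen G.dir v d → d ∉ S) ∨
  (∃ i v, NonColliderAt L i v ∧ v ∈ S)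

/-- The walk `L` from `x` to `y` is σ-blocked by the node set `S`. -/
def SigmaBlockedWalk (G : MixedGraph V) (S : Set V) (x y : V) (L : List (Step V)) : Prop :=
  x ∈ S ∨ y ∈ S ∨
  (∃ i v, ColliderAt L i v ∧ ∀ d, Relation.ReflTransGen G.dir v d → d ∉ S) ∨
  (∃ i s t, L[i]? = some s ∧ L[i+1]? = some t ∧ s.b = t.a ∧ ¬ (s.headB ∧ t.headA) ∧
    s.b ∈ S ∧
    (((s.k = .bw ∨ s.k = .un) ∧ ¬ G.Strongly s.b s.a) ∨
     ((t.k = .fw ∨ t.k = .un) ∧ ¬ G.Strongly t.a t.b)))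

/-- `x` and `y` are m-separated by `S` in `G`. -/
def MSep (G : MixedGraph V) (S : Set V) (x y : V) : Prop :=
  ∀ L, G.IsWalk x y L → G.MBlockedWalk S x y L

/-- `x` and `y` are σ-separated by `S` in `G`. -/
def SigmaSep (G : MixedGraph V) (S : Set V) (x y : V) : Prop :=
  ∀ L, G.IsWalk x y L → G.SigmaBlockedWalk S x y L

/-! ## Acyclification -/

/-- The acyclification of a mixed graph. -/
def acy (G : MixedGraph V) : MixedGraph V where
  dir a b := (∃ c, G.dir a c ∧ G.Strongly c b) ∧ ¬ G.Strongly a b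
  bidir a b := a ≠ b ∧ (G.Strongly a b ∨
    ∃ a' b', G.Strongly a a' ∧ G.Strongly b b' ∧ G.bidir a' b')
  undir a b := ¬ G.Strongly a b ∧ G.undir a b
  bidir_symm := by
    rintro a b ⟨hab, h | ⟨a', b', ha, hb, h⟩⟩
    · exact ⟨hab.symm, Or.inl h.symm⟩
    · exact ⟨hab.symm, Or.inr ⟨b', a', hb, ha, G.bidir_symm h⟩⟩
  undir_symm := by
    rintro a b ⟨h1, h2⟩
    exact ⟨fun h => h1 h.symm, G.undir_symm h2⟩
  dir_irrefl := fun a h => h.2 (Strongly.refl G a)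
  bidir_irrefl := fun a h => h.1 rfl
  undir_irrefl := fun a h => h.1 (Strongly.refl G a)

/-! ## Coarse graphs -/

/-- The coarse (quotient) graph of `G` with respect to the partition given by the
quotient map `q` onto the set of groups `I`. -/
def coarse (G : MixedGraph V) (q : V → I) : MixedGraph I where
  dir Y Z := Y ≠ Z ∧ ∃ y z, q y = Y ∧ q z = Z ∧ G.dir y z
  bidir Y Z := Y ≠ Z ∧ ∃ y z, q y = Y ∧ q z = Z ∧ G.bidir y z
  undir Y Z := Y ≠ Z ∧ ∃ y z, q y = Y ∧ q z = Z ∧ G.undir y z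
  bidir_symm := by
    rintro Y Z ⟨hne, y, z, hy, hz, h⟩
    exact ⟨hne.symm, z, y, hz, hy, G.bidir_symm h⟩
  undir_symm := by
    rintro Y Z ⟨hne, y, z, hy, hz, h⟩
    exact ⟨hne.symm, z, y, hz, hy, G.undir_symm h⟩
  dir_irrefl := fun Y h => h.1 rfl
  bidir_irrefl := fun Y h => h.1 rfl
  undir_irrefl := fun Y h => h.1 rfl

end MixedGraph


private lemma mg_ext {V : Type} {G H : MixedGraph V} (hd : G.dir = H.dir)
    (hb : G.bidir = H.bidir) (hu : G.undir = H.undir) : G = H := by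
  cases G; cases H; dsimp at hd hb hu; subst hd hb hu; rfl

open MixedGraph in
private lemma rtg_coarse {V I : Type} (G : MixedGraph V) (q : V → I) {a b : V}
    (h : Relation.ReflTransGen G.dir a b) :
    Relation.ReflTransGen (G.coarse q).dir (q a) (q b) := by
  induction h with
  | refl => exact Relation.ReflTransGen.refl
  | @tail x y hab hbc ih =>
    by_cases hqe : q x = q y
    · exact hqe ▸ ih
    · exact ih.tail ⟨hqe, x, y, rfl, rfl, hbc⟩

open MixedGraph in
private lemma strongly_q_eq {V I : Type} (G : MixedGraph V) (q : V → I)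
    (hacy : (G.coarse q).Acyclic) {a b : V} (h : G.Strongly a b) : q a = q b := by
  by_contra hne
  have h1 := rtg_coarse G q h.1
  have h2 := rtg_coarse G q h.2
  rcases h1.cases_head with heq | ⟨c, hc, hcb⟩
  · exact hne heq
  · exact hacy (q a) (Relation.TransGen.trans_left (Relation.TransGen.head' hc hcb) h2)

open MixedGraph in
/-- If the partition given by the quotient map `q` is acyclic with
respect to `G` (that is, the coarse graph of `G` is acyclic), then the coarse graph
of the acyclification of `G` equals the coarse graph of `G`. -/
theorem coarse_acy_eq_coarse {V I : Type} (G : MixedGraph V) (q : V → I)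
    (hq : Function.Surjective q) (hacy : (G.coarse q).Acyclic) :
    (G.acy).coarse q = G.coarse q := by
  have key : ∀ {a b : V}, G.Strongly a b → q a = q b := fun h => strongly_q_eq G q hacy h
  have hd : ((G.acy).coarse q).dir = (G.coarse q).dir := by
    funext Y Z; apply propext
    constructor
    · rintro ⟨hne, y, z, rfl, rfl, ⟨⟨c, hyc, hcz⟩, -⟩⟩
      exact ⟨hne, y, c, rfl, key hcz, hyc⟩
    · rintro ⟨hne, y, z, rfl, rfl, h⟩
      exact ⟨hne, y, z, rfl, rfl, ⟨⟨z, h, Strongly.refl G z⟩, fun hs => hne (key hs)⟩⟩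
  have hb : ((G.acy).coarse q).bidir = (G.coarse q).bidir := by
    funext Y Z; apply propext
    constructor
    · rintro ⟨hne, y, z, rfl, rfl, ⟨-, hs | ⟨a', b', ha, hbb, h⟩⟩⟩
      · exact absurd (key hs) hne
      · exact ⟨hne, a', b', (key ha).symm, (key hbb).symm, h⟩
    · rintro ⟨hne, y, z, rfl, rfl, h⟩
      exact ⟨hne, y, z, rfl, rfl, ⟨fun he => hne (he ▸ rfl),
        Or.inr ⟨y, z, Strongly.refl G y, Strongly.refl G z, h⟩⟩⟩
  have hu : ((G.acy).coarse q).undir = (G.coarse q).undir := by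
    funext Y Z; apply propext
    constructor
    · rintro ⟨hne, y, z, rfl, rfl, ⟨-, h⟩⟩
      exact ⟨hne, y, z, rfl, rfl, h⟩
    · rintro ⟨hne, y, z, rfl, rfl, h⟩
      exact ⟨hne, y, z, rfl, rfl, ⟨fun hs => hne (key hs), h⟩⟩
  exact mg_ext hd hb hu
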